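/- arXiv:1306.0386 — 5 statements merged into one kernel-verified Lean document; each statement's English description precedes it below -/
import Mathlib

section
/- Let π be any policy of the MDP and let π' be any policy that is greedy with respect to v_π (i.e. T_{π'} v_π = T v_π). Then ‖v_* − v_{π'}‖_∞ ≤ γ ‖v_* − v_π‖_∞. In particular, the sequence (‖v_* − v_{π_k}‖_∞)_{k≥0} built by Howard's PI is contracting with coefficient γ. -/
open Matrix BigOperators

/-- A finite discounted MDP with `n ≥ 1` states and `m ≥ 2` actions:
transition probabilities `p i a j`, rewards `r i a j`, discount factor `γ ∈ (0,1)`. -/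
structure MDP (n m : ℕ) : Type where
  n_pos : 1 ≤ n
  m_ge_two : 2 ≤ m
  p : Fin n → Fin m → Fin n → ℝ
  r : Fin n → Fin m → Fin n → ℝ
  γ : ℝ
  p_nonneg : ∀ i a j, 0 ≤ p i a j
  p_sum : ∀ i a, ∑ j, p i a j = 1
  γ_pos : 0 < γ
  γ_lt_one : γ < 1

/-- A (stationary deterministic) policy. -/
abbrev MDP.Policy (n m : ℕ) : Type := Fin n → Fin m

namespace MDP

variable {n m : ℕ}

/-- The row-stochastic transition matrix `P_π` of a policy. -/
def P (M : MDP n m) (π : Policy n m) : Matrix (Fin n) (Fin n) ℝ :=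
  Matrix.of fun i j => M.p i (π i) j

/-- The expected reward vector `r_π` of a policy. -/
def rPol (M : MDP n m) (π : Policy n m) : Fin n → ℝ :=
  fun i => ∑ j, M.p i (π i) j * M.r i (π i) j

/-- The Bellman operator `T_π v = r_π + γ P_π v` of a policy. -/
def Tpol (M : MDP n m) (π : Policy n m) (v : Fin n → ℝ) : Fin n → ℝ :=
  fun i => M.rPol π i + M.γ * (M.P π *ᵥ v) i

/-- `IsValue M V` asserts that, for every policy `π`, `V π` is the value function `v_π`,
i.e. the (unique) solution of the Bellman equation `v_π = T_π v_π`. -/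
def IsValue (M : MDP n m) (V : Policy n m → Fin n → ℝ) : Prop :=
  ∀ π, V π = M.Tpol π (V π)

/-- The optimal Bellman operator `T v = max_π T_π v` (componentwise maximum). -/
noncomputable def T (M : MDP n m) (v : Fin n → ℝ) : Fin n → ℝ :=
  fun i => ⨆ π : Policy n m, M.Tpol π v i

/-- The optimal value function `v_*`, the componentwise maximum of `v_π` over policies. -/
noncomputable def vStar (M : MDP n m) (V : Policy n m → Fin n → ℝ) : Fin n → ℝ :=
  fun i => ⨆ π : Policy n m, V π i

/-- A policy is optimal when its value equals `v_*`. -/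
def IsOptimal (M : MDP n m) (V : Policy n m → Fin n → ℝ) (π : Policy n m) : Prop :=
  V π = M.vStar V

/-- `π'` is greedy with respect to `v_π`: `T_{π'} v_π = T v_π`.  One step of Howard's PI
from a non-optimal `π` moves to such a `π'`. -/
def Greedy (M : MDP n m) (V : Policy n m → Fin n → ℝ) (π π' : Policy n m) : Prop :=
  M.Tpol π' (V π) = M.T (V π)

/-- One step of Simplex-PI: `π'` agrees with `π` except at a single state `s` maximizing
the advantage `a_π(i) = (T v_π - v_π)(i)`, where `π'(s)` achieves `T v_π(s)`. -/
def SimplexStep (M : MDP n m) (V : Policy n m → Fin n → ℝ) (π π' : Policy n m) : Prop :=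
  ∃ s : Fin n, (∀ i, i ≠ s → π' i = π i) ∧
    (∀ i, M.T (V π) i - V π i ≤ M.T (V π) s - V π s) ∧
    M.Tpol π' (V π) s = M.T (V π) s

/-- The vector `x_π = (I - γ P_πᵀ)⁻¹ 1`. -/
noncomputable def xPol (M : MDP n m) (π : Policy n m) : Fin n → ℝ :=
  ((1 : Matrix (Fin n) (Fin n) ℝ) - M.γ • (M.P π)ᵀ)⁻¹ *ᵥ (fun _ => (1 : ℝ))

/-- `R` is a recurrent class of `π`: nonempty, closed under positive-probability
transitions of `P_π`, and every state of `R` is reachable from every other state of `R`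
along positive-probability transitions.  (For a deterministic MDP this is the notion of
a cycle of `π`.) -/
def IsRecClass (M : MDP n m) (π : Policy n m) (R : Set (Fin n)) : Prop :=
  R.Nonempty ∧ (∀ i ∈ R, ∀ j, 0 < M.P π i j → j ∈ R) ∧
    ∀ i ∈ R, ∀ j ∈ R, Relation.ReflTransGen (fun a b => 0 < M.P π a b) i j

/-- A state is recurrent for `π` if it belongs to some recurrent class of `π`. -/
def Recurrent (M : MDP n m) (π : Policy n m) (i : Fin n) : Prop :=
  ∃ R : Set (Fin n), M.IsRecClass π R ∧ i ∈ R

/-- A state is transient for `π` if it is not recurrent for `π`. -/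
def Transient (M : MDP n m) (π : Policy n m) (i : Fin n) : Prop :=
  ¬ M.Recurrent π i

/-- Assumption 1: `τ_t, τ_r ≥ 1` with `x_π(i) ≤ τ_t` for transient states and
`x_π(i) ≥ n / ((1-γ) τ_r)` for recurrent states, for every policy `π`. -/
def Ass1 (M : MDP n m) (τt τr : ℝ) : Prop :=
  1 ≤ τt ∧ 1 ≤ τr ∧
    (∀ π i, M.Transient π i → M.xPol π i ≤ τt) ∧
    (∀ π i, M.Recurrent π i → (n : ℝ) / ((1 - M.γ) * τr) ≤ M.xPol π i)

/-- Assumption 2: the state space is partitioned into a set of states transient for every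
policy and a set of states recurrent for every policy. -/
def Ass2 (M : MDP n m) : Prop :=
  ∃ 𝒯 ℛ : Set (Fin n), 𝒯 ∪ ℛ = Set.univ ∧ 𝒯 ∩ ℛ = ∅ ∧
    ∀ π : Policy n m, (∀ i ∈ 𝒯, M.Transient π i) ∧ (∀ i ∈ ℛ, M.Recurrent π i)

/-- The MDP is deterministic when every transition probability is 0 or 1. -/
def Deterministic (M : MDP n m) : Prop :=
  ∀ i a j, M.p i a j = 0 ∨ M.p i a j = 1

/-- `V_max = (max_π ‖r_π‖_∞) / (1 - γ)`. -/
noncomputable def Vmax (M : MDP n m) : ℝ :=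
  (⨆ π : Policy n m, ‖M.rPol π‖) / (1 - M.γ)

end MDP

/-!
`v_*` is a subsolution of the Bellman equation, `v_* ≤ T v_*`, and greedy improvement gives
`T v_π = T_{π'} v_π ≤ T_{π'} v_{π'} = v_{π'}` (monotonicity plus `v_π ≤ v_{π'}`). Hence
`0 ≤ v_* - v_{π'} ≤ T v_* - T v_π`, and `T` is a `γ`-contraction for the max-norm because every
`T_σ` is one, `P_σ` being row-stochastic.
-/

namespace Matrix

variable {R ι : Type*} [Fintype ι] [DecidableEq ι] [CommRing R] [LinearOrder R]
  [IsStrictOrderedRing R] {A : Matrix ι ι R}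

theorem mulVec_mono_of_mem_rowStochastic (hA : A ∈ rowStochastic R ι) {x y : ι → R}
    (h : x ≤ y) : A *ᵥ x ≤ A *ᵥ y := fun i => by
  have := nonneg_mulVec_of_mem_rowStochastic hA (x := y - x) (fun j => sub_nonneg.2 (h j)) i
  rwa [mulVec_sub, Pi.sub_apply, sub_nonneg] at this

theorem mulVec_apply_le_of_mem_rowStochastic (hA : A ∈ rowStochastic R ι) {x : ι → R} {c : R}
    (h : ∀ j, x j ≤ c) (i : ι) : (A *ᵥ x) i ≤ c :=
  calc (A *ᵥ x) i ≤ (A *ᵥ fun _ => c) i := mulVec_mono_of_mem_rowStochastic hA h i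
    _ = c := by simp [mulVec, dotProduct, ← Finset.sum_mul, sum_row_of_mem_rowStochastic hA i]

theorem nonpos_of_le_smul_mulVec_of_mem_rowStochastic (hA : A ∈ rowStochastic R ι) {γ : R}
    (hγ0 : 0 ≤ γ) (hγ1 : γ < 1) {d : ι → R} (hd : ∀ i, d i ≤ γ * (A *ᵥ d) i) : d ≤ 0 := by
  intro i
  have : Nonempty ι := ⟨i⟩
  obtain ⟨k, hk⟩ := Finite.exists_max d
  have hdk : d k ≤ γ * d k :=
    (hd k).trans (mul_le_mul_of_nonneg_left (mulVec_apply_le_of_mem_rowStochastic hA hk k) hγ0)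
  have : d k ≤ 0 := by nlinarith
  exact (hk i).trans this

end Matrix

namespace MDP

variable {n m : ℕ}

theorem nonempty_policy (M : MDP n m) : Nonempty (Policy n m) :=
  ⟨fun _ => ⟨0, by have := M.m_ge_two; omega⟩⟩

variable (M : MDP n m)

theorem P_mem_rowStochastic (σ : Policy n m) : M.P σ ∈ rowStochastic ℝ (Fin n) :=
  mem_rowStochastic_iff_sum.2 ⟨fun i j => M.p_nonneg i (σ i) j, fun i => M.p_sum i (σ i)⟩

theorem Tpol_apply_sub_Tpol_apply (σ : Policy n m) (u w : Fin n → ℝ) (i : Fin n) :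
    M.Tpol σ u i - M.Tpol σ w i = M.γ * (M.P σ *ᵥ (u - w)) i := by
  simp only [Tpol, mulVec_sub, Pi.sub_apply]
  ring

theorem Tpol_mono (σ : Policy n m) : Monotone (M.Tpol σ) := fun u w h i => by
  have hP := nonneg_mulVec_of_mem_rowStochastic (M.P_mem_rowStochastic σ) (x := w - u)
    (fun j => sub_nonneg.2 (h j)) i
  rw [← sub_nonneg, M.Tpol_apply_sub_Tpol_apply]
  exact mul_nonneg M.γ_pos.le hP

theorem Tpol_le_T (σ : Policy n m) (v : Fin n → ℝ) : M.Tpol σ v ≤ M.T v := fun i =>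
  le_ciSup (f := fun σ => M.Tpol σ v i) (Set.finite_range _).bddAbove σ

theorem T_apply_sub_T_apply_le (u w : Fin n → ℝ) (i : Fin n) :
    M.T u i - M.T w i ≤ M.γ * ‖u - w‖ := by
  have := M.nonempty_policy
  rw [sub_le_iff_le_add']
  refine ciSup_le fun σ => ?_
  have hP : (M.P σ *ᵥ (u - w)) i ≤ ‖u - w‖ :=
    mulVec_apply_le_of_mem_rowStochastic (M.P_mem_rowStochastic σ)
      (fun j => (le_abs_self _).trans (norm_le_pi_norm (u - w) j)) i
  calc M.Tpol σ u i = M.Tpol σ w i + M.γ * (M.P σ *ᵥ (u - w)) i := by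
        rw [← M.Tpol_apply_sub_Tpol_apply]; ring
    _ ≤ M.T w i + M.γ * ‖u - w‖ :=
        add_le_add (M.Tpol_le_T σ w i) (mul_le_mul_of_nonneg_left hP M.γ_pos.le)

variable {M} {V : Policy n m → Fin n → ℝ}

theorem le_vStar (σ : Policy n m) : V σ ≤ M.vStar V := fun i =>
  le_ciSup (f := fun σ => V σ i) (Set.finite_range _).bddAbove σ

theorem vStar_le_T_vStar (hV : M.IsValue V) : M.vStar V ≤ M.T (M.vStar V) := fun i => by
  have := M.nonempty_policy
  refine ciSup_le fun σ => ?_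
  calc V σ i = M.Tpol σ (V σ) i := by rw [← hV σ]
    _ ≤ M.Tpol σ (M.vStar V) i := M.Tpol_mono σ (le_vStar σ) i
    _ ≤ M.T (M.vStar V) i := M.Tpol_le_T σ _ i

theorem value_le_value_of_le_Tpol (hV : M.IsValue V) {π π' : Policy n m}
    (h : V π ≤ M.Tpol π' (V π)) : V π ≤ V π' := by
  suffices V π - V π' ≤ 0 from fun i => sub_nonpos.1 (this i)
  refine nonpos_of_le_smul_mulVec_of_mem_rowStochastic (M.P_mem_rowStochastic π') M.γ_pos.le
    M.γ_lt_one fun i => ?_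
  calc (V π - V π') i ≤ M.Tpol π' (V π) i - M.Tpol π' (V π') i := by
        rw [Pi.sub_apply, ← congrFun (hV π') i]
        linarith [h i]
    _ = M.γ * (M.P π' *ᵥ (V π - V π')) i := M.Tpol_apply_sub_Tpol_apply π' _ _ i

theorem Greedy.T_le_value (hV : M.IsValue V) {π π' : Policy n m} (hg : M.Greedy V π π') :
    M.T (V π) ≤ V π' := by
  have hle : V π ≤ M.Tpol π' (V π) := by
    rw [hg]
    exact (hV π).le.trans (M.Tpol_le_T π (V π))
  calc M.T (V π) = M.Tpol π' (V π) := hg.symm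
    _ ≤ M.Tpol π' (V π') := M.Tpol_mono π' (value_le_value_of_le_Tpol hV hle)
    _ = V π' := (hV π').symm

end MDP

/-- one step of Howard's PI contracts the max-norm distance to `v_*`
with coefficient `γ`. -/
theorem howard_contraction {n m : ℕ} (M : MDP n m)
    (V : MDP.Policy n m → Fin n → ℝ) (hV : M.IsValue V)
    (π π' : MDP.Policy n m) (hgreedy : M.Greedy V π π') :
    ‖M.vStar V - V π'‖ ≤ M.γ * ‖M.vStar V - V π‖ := by
  refine (pi_norm_le_iff_of_nonneg (mul_nonneg M.γ_pos.le (norm_nonneg _))).2 fun i => ?_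
  have h_nonneg : 0 ≤ M.vStar V i - V π' i := sub_nonneg.2 (MDP.le_vStar π' i)
  rw [Real.norm_eq_abs, Pi.sub_apply, abs_of_nonneg h_nonneg]
  calc M.vStar V i - V π' i ≤ M.T (M.vStar V) i - M.T (V π) i :=
        sub_le_sub (MDP.vStar_le_T_vStar hV i) (hgreedy.T_le_value hV i)
    _ ≤ M.γ * ‖M.vStar V - V π‖ := M.T_apply_sub_T_apply_le _ _ i
end

section
/- Howard's PI terminates after at most n(m−1)⌈(1/(1−γ)) log(1/(1−γ))⌉ iterations: if π_0, π_1, …, π_K is a sequence of policies generated by Howard's PI such that π_k is not optimal for every k < K, then K ≤ n(m−1)⌈(1/(1−γ)) log(1/(1−γ))⌉. -/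
open Matrix BigOperators

namespace HowardAux

open MDP

variable {n m : ℕ}

lemma policy_nonempty (M : MDP n m) : Nonempty (MDP.Policy n m) :=
  ⟨fun _ => ⟨0, lt_of_lt_of_le two_pos M.m_ge_two⟩⟩

/-- max of componentwise difference -/
noncomputable def mdv (M : MDP n m) (u w : Fin n → ℝ) : ℝ :=
  Finset.univ.sup' (Finset.univ_nonempty_iff.mpr ⟨⟨0, M.n_pos⟩⟩) fun i => u i - w i

lemma le_mdv (M : MDP n m) (u w : Fin n → ℝ) (i : Fin n) : u i - w i ≤ mdv M u w :=
  Finset.le_sup' (fun i => u i - w i) (Finset.mem_univ i)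

lemma mdv_exists (M : MDP n m) (u w : Fin n → ℝ) : ∃ i, mdv M u w = u i - w i := by
  obtain ⟨i, -, h⟩ := Finset.exists_mem_eq_sup'
    (Finset.univ_nonempty_iff.mpr ⟨⟨0, M.n_pos⟩⟩) (fun i => u i - w i)
  exact ⟨i, h⟩

lemma P_mulVec (M : MDP n m) (π : MDP.Policy n m) (x : Fin n → ℝ) (i : Fin n) :
    (M.P π *ᵥ x) i = ∑ j, M.p i (π i) j * x j := by
  simp [MDP.P, Matrix.mulVec, dotProduct]

lemma mulVec_le_of_le (M : MDP n m) (π : MDP.Policy n m) (x : Fin n → ℝ) (c : ℝ)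
    (hx : ∀ j, x j ≤ c) (i : Fin n) : (M.P π *ᵥ x) i ≤ c := by
  rw [P_mulVec]
  calc ∑ j, M.p i (π i) j * x j ≤ ∑ j, M.p i (π i) j * c :=
        Finset.sum_le_sum fun j _ => mul_le_mul_of_nonneg_left (hx j) (M.p_nonneg _ _ _)
    _ = c := by rw [← Finset.sum_mul, M.p_sum, one_mul]

lemma Tpol_sub (M : MDP n m) (π : MDP.Policy n m) (u w : Fin n → ℝ) (i : Fin n) :
    M.Tpol π u i - M.Tpol π w i = M.γ * (M.P π *ᵥ (u - w)) i := by
  simp only [MDP.Tpol, Matrix.mulVec_sub, Pi.sub_apply]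
  ring

lemma Tpol_lip (M : MDP n m) (π : MDP.Policy n m) (u w : Fin n → ℝ) (i : Fin n) :
    M.Tpol π u i - M.Tpol π w i ≤ M.γ * mdv M u w := by
  rw [Tpol_sub]
  refine mul_le_mul_of_nonneg_left ?_ M.γ_pos.le
  exact mulVec_le_of_le M π _ _ (fun j => by simpa using le_mdv M u w j) i

lemma Tpol_mono (M : MDP n m) (π : MDP.Policy n m) (u w : Fin n → ℝ)
    (h : ∀ j, u j ≤ w j) (i : Fin n) : M.Tpol π u i ≤ M.Tpol π w i := by
  have h1 := Tpol_sub M π u w i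
  have h2 : (M.P π *ᵥ (u - w)) i ≤ 0 :=
    mulVec_le_of_le M π _ 0 (fun j => by simpa using sub_nonpos.mpr (h j)) i
  nlinarith [M.γ_pos]

lemma Tpol_congr (M : MDP n m) (π π' : MDP.Policy n m) (v : Fin n → ℝ) (i : Fin n)
    (h : π i = π' i) : M.Tpol π v i = M.Tpol π' v i := by
  simp only [MDP.Tpol, MDP.rPol, P_mulVec, h]

lemma le_value (M : MDP n m) (V : MDP.Policy n m → Fin n → ℝ) (hV : M.IsValue V)
    (σ : MDP.Policy n m) (u : Fin n → ℝ)
    (h : ∀ i, u i ≤ M.Tpol σ u i) : ∀ i, u i ≤ V σ i := by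
  have hkey : mdv M u (V σ) ≤ 0 := by
    obtain ⟨i0, hi0⟩ := mdv_exists M u (V σ)
    have hb := congrFun (hV σ) i0
    have h2 := Tpol_lip M σ u (V σ) i0
    have hc : mdv M u (V σ) ≤ M.γ * mdv M u (V σ) := by
      have := h i0; linarith
    by_contra hc0
    push_neg at hc0
    have := mul_lt_mul_of_pos_right M.γ_lt_one hc0
    rw [one_mul] at this
    linarith
  intro i; linarith [le_mdv M u (V σ) i]

lemma value_le (M : MDP n m) (V : MDP.Policy n m → Fin n → ℝ) (hV : M.IsValue V)
    (σ : MDP.Policy n m) (u : Fin n → ℝ)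
    (h : ∀ i, M.Tpol σ u i ≤ u i) : ∀ i, V σ i ≤ u i := by
  have hkey : mdv M (V σ) u ≤ 0 := by
    obtain ⟨i0, hi0⟩ := mdv_exists M (V σ) u
    have hb := congrFun (hV σ) i0
    have h2 := Tpol_lip M σ (V σ) u i0
    have hc : mdv M (V σ) u ≤ M.γ * mdv M (V σ) u := by
      have := h i0; linarith
    by_contra hc0
    push_neg at hc0
    have := mul_lt_mul_of_pos_right M.γ_lt_one hc0
    rw [one_mul] at this
    linarith
  intro i; linarith [le_mdv M (V σ) u i]

lemma value_le_vstar (M : MDP n m) (V : MDP.Policy n m → Fin n → ℝ)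
    (π : MDP.Policy n m) (i : Fin n) : V π i ≤ M.vStar V i := by
  haveI := policy_nonempty M
  exact le_ciSup ((Set.finite_range fun π' : MDP.Policy n m => V π' i).bddAbove) π

lemma Tpol_le_T (M : MDP n m) (π : MDP.Policy n m) (v : Fin n → ℝ) (i : Fin n) :
    M.Tpol π v i ≤ M.T v i := by
  haveI := policy_nonempty M
  exact le_ciSup ((Set.finite_range fun π' : MDP.Policy n m => M.Tpol π' v i).bddAbove) π

lemma ciSup_eq_of_max {ι : Type*} [Finite ι] [Nonempty ι] (f : ι → ℝ) :
    ∃ a, (⨆ b, f b) = f a := by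
  obtain ⟨a, ha⟩ := Finite.exists_max f
  exact ⟨a, le_antisymm (ciSup_le ha) (le_ciSup (Set.finite_range f).bddAbove a)⟩

lemma exists_greedy (M : MDP n m) (v : Fin n → ℝ) :
    ∃ g : MDP.Policy n m, ∀ i, M.Tpol g v i = M.T v i := by
  haveI := policy_nonempty M
  have h : ∀ i : Fin n, ∃ π : MDP.Policy n m, M.T v i = M.Tpol π v i := fun i =>
    ciSup_eq_of_max _
  choose σ hσ using h
  refine ⟨fun i => σ i i, fun i => ?_⟩
  exact (Tpol_congr M (fun j => σ j j) (σ i) v i rfl).trans (hσ i).symm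

lemma vstar_le_T (M : MDP n m) (V : MDP.Policy n m → Fin n → ℝ) (hV : M.IsValue V)
    (i : Fin n) : M.vStar V i ≤ M.T (M.vStar V) i := by
  haveI := policy_nonempty M
  refine ciSup_le fun π => ?_
  have h1 : V π i = M.Tpol π (V π) i := congrFun (hV π) i
  calc V π i = M.Tpol π (V π) i := h1
    _ ≤ M.Tpol π (M.vStar V) i := Tpol_mono M π _ _ (fun j => value_le_vstar M V π j) i
    _ ≤ M.T (M.vStar V) i := Tpol_le_T M π _ i

lemma opt_facts (M : MDP n m) (V : MDP.Policy n m → Fin n → ℝ) (hV : M.IsValue V) :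
    ∃ pg : MDP.Policy n m, (∀ i, V pg i = M.vStar V i) ∧
      (∀ i, M.Tpol pg (M.vStar V) i = M.vStar V i) ∧
      (∀ π : MDP.Policy n m, ∀ i, M.Tpol π (M.vStar V) i ≤ M.vStar V i) := by
  classical
  haveI := policy_nonempty M
  obtain ⟨g, hg⟩ := exists_greedy M (M.vStar V)
  have hgT : ∀ i, M.vStar V i ≤ M.Tpol g (M.vStar V) i := fun i =>
    (vstar_le_T M V hV i).trans (hg i).ge
  have hVg : ∀ i, V g i = M.vStar V i := by
    intro i
    refine le_antisymm (value_le_vstar M V g i) ?_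
    exact le_value M V hV g (M.vStar V) hgT i
  have hopt : ∀ π : MDP.Policy n m, ∀ j, M.Tpol π (M.vStar V) j ≤ M.vStar V j := by
    intro π
    set π' : MDP.Policy n m := fun j =>
      if M.vStar V j < M.Tpol π (M.vStar V) j then π j else g j with hπ'
    have h1 : ∀ j, M.vStar V j ≤ M.Tpol π' (M.vStar V) j := by
      intro j
      by_cases hj : M.vStar V j < M.Tpol π (M.vStar V) j
      · have he : π' j = π j := by simp [hπ', hj]
        rw [Tpol_congr M π' π _ j he]
        exact hj.le
      · have he : π' j = g j := by simp [hπ', hj]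
        rw [Tpol_congr M π' g _ j he]
        exact hgT j
    have h2 : ∀ j, V π' j = M.vStar V j := by
      intro j
      refine le_antisymm (value_le_vstar M V π' j) ?_
      exact le_value M V hV π' (M.vStar V) h1 j
    have h3 : ∀ j, M.Tpol π' (M.vStar V) j = M.vStar V j := by
      intro j
      have := congrFun (hV π') j
      have hfun : V π' = M.vStar V := funext h2
      rw [hfun] at this
      exact this.symm
    intro j
    by_contra hj
    push_neg at hj
    have he : π' j = π j := by simp [hπ', hj]
    have := h3 j
    rw [Tpol_congr M π' π _ j he] at this
    linarith
  refine ⟨g, hVg, fun i => ?_, hopt⟩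
  exact le_antisymm (hopt g i) (hgT i)


lemma nm_sub (n m : ℕ) : n * m - n = n * (m - 1) := by
  cases m with
  | zero => simp
  | succ m' => simp [Nat.mul_succ]

lemma ceil_facts (M : MDP n m) :
    1 ≤ ⌈(1 / (1 - M.γ)) * Real.log (1 / (1 - M.γ))⌉ ∧
    M.γ ^ (⌈(1 / (1 - M.γ)) * Real.log (1 / (1 - M.γ))⌉.toNat) < 1 - M.γ := by
  have h1γ : 0 < 1 - M.γ := by linarith [M.γ_lt_one]
  have hinv : 1 < 1 / (1 - M.γ) := by
    rw [lt_div_iff₀ h1γ]; linarith [M.γ_pos]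
  have hL : 0 < Real.log (1 / (1 - M.γ)) := Real.log_pos hinv
  have hx : 0 < (1 / (1 - M.γ)) * Real.log (1 / (1 - M.γ)) :=
    mul_pos (by linarith) hL
  have hc0 : 0 < ⌈(1 / (1 - M.γ)) * Real.log (1 / (1 - M.γ))⌉ := Int.ceil_pos.mpr hx
  refine ⟨hc0, ?_⟩
  set c : ℤ := ⌈(1 / (1 - M.γ)) * Real.log (1 / (1 - M.γ))⌉ with hcdef
  set k : ℕ := c.toNat with hkdef
  have hk1 : 1 ≤ k := by omega
  have hkc : ((k : ℕ) : ℝ) = (c : ℝ) := by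
    rw [hkdef]
    have h := Int.toNat_of_nonneg (le_of_lt hc0)
    exact_mod_cast h
  have hck : (1 / (1 - M.γ)) * Real.log (1 / (1 - M.γ)) ≤ (c : ℝ) := Int.le_ceil _
  have hLk : Real.log (1 / (1 - M.γ)) ≤ (k : ℝ) * (1 - M.γ) := by
    have hmul := mul_le_mul_of_nonneg_right hck h1γ.le
    have hid : (1 / (1 - M.γ)) * Real.log (1 / (1 - M.γ)) * (1 - M.γ) =
        Real.log (1 / (1 - M.γ)) := by field_simp
    rw [hid] at hmul
    rw [hkc]
    exact hmul
  have hlogγ : Real.log M.γ < M.γ - 1 :=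
    Real.log_lt_sub_one_of_pos M.γ_pos (ne_of_lt M.γ_lt_one)
  have hkpos : (0 : ℝ) < (k : ℝ) := by
    have : (0 : ℕ) < k := by omega
    exact_mod_cast this
  have hlt : (k : ℝ) * Real.log M.γ < - Real.log (1 / (1 - M.γ)) := by
    have h2 := mul_lt_mul_of_pos_left hlogγ hkpos
    nlinarith [hLk]
  have hlog : Real.log (M.γ ^ k) < Real.log (1 - M.γ) := by
    rw [Real.log_pow]
    have he : Real.log (1 - M.γ) = - Real.log (1 / (1 - M.γ)) := by
      rw [one_div, Real.log_inv]; ring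
    rw [he]
    exact_mod_cast hlt
  calc M.γ ^ k = Real.exp (Real.log (M.γ ^ k)) := (Real.exp_log (pow_pos M.γ_pos k)).symm
    _ < Real.exp (Real.log (1 - M.γ)) := Real.exp_lt_exp.mpr hlog
    _ = 1 - M.γ := Real.exp_log h1γ

end HowardAux

/-- Howard's PI terminates after at most
`n(m-1)⌈(1/(1-γ)) log(1/(1-γ))⌉` iterations. -/
theorem howard_termination {n m : ℕ} (M : MDP n m)
    (V : MDP.Policy n m → Fin n → ℝ) (hV : M.IsValue V)
    (π : ℕ → MDP.Policy n m) (K : ℕ)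
    (hrun : ∀ k < K, ¬ M.IsOptimal V (π k) ∧ M.Greedy V (π k) (π (k + 1))) :
    (K : ℝ) ≤ (n : ℝ) * ((m : ℝ) - 1) *
      ((⌈(1 / (1 - M.γ)) * Real.log (1 / (1 - M.γ))⌉ : ℤ) : ℝ) := by
  classical
  haveI := HowardAux.policy_nonempty M
  have h1γ : 0 < 1 - M.γ := by linarith [M.γ_lt_one]
  obtain ⟨hc1, hpowlt⟩ := HowardAux.ceil_facts M
  set c : ℤ := ⌈(1 / (1 - M.γ)) * Real.log (1 / (1 - M.γ))⌉ with hcdef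
  set kst : ℕ := c.toNat with hkstdef
  have hkst1 : 1 ≤ kst := by omega
  obtain ⟨pg, hpgV, hpgT, hTle⟩ := HowardAux.opt_facts M V hV
  set vs := M.vStar V with hvs
  set Δ : ℕ → ℝ := fun k => HowardAux.mdv M vs (V (π k)) with hΔ
  have hΔnonneg : ∀ k, 0 ≤ Δ k := by
    intro k
    have h1 := HowardAux.value_le_vstar M V (π k) ⟨0, M.n_pos⟩
    have h2 := HowardAux.le_mdv M vs (V (π k)) ⟨0, M.n_pos⟩
    simp only [hΔ]
    rw [hvs] at h2 ⊢
    linarith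
  have hΔpos : ∀ k < K, 0 < Δ k := by
    intro k hk
    by_contra h0
    push_neg at h0
    have hz : Δ k = 0 := le_antisymm h0 (hΔnonneg k)
    have heq : ∀ i, V (π k) i = vs i := by
      intro i
      have h1 := HowardAux.value_le_vstar M V (π k) i
      have h2 := HowardAux.le_mdv M vs (V (π k)) i
      rw [← hvs] at h1
      have h3 : HowardAux.mdv M vs (V (π k)) = 0 := hz
      linarith
    exact (hrun k hk).1 (funext heq)
  have himp : ∀ k < K, ∀ i, M.T (V (π k)) i ≤ V (π (k + 1)) i := by
    intro k hk i
    have hg := (hrun k hk).2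
    have hle : ∀ j, V (π k) j ≤ M.Tpol (π (k + 1)) (V (π k)) j := by
      intro j
      calc V (π k) j = M.Tpol (π k) (V (π k)) j := congrFun (hV (π k)) j
        _ ≤ M.T (V (π k)) j := HowardAux.Tpol_le_T M (π k) _ j
        _ = M.Tpol (π (k + 1)) (V (π k)) j := (congrFun hg j).symm
    have hval := HowardAux.le_value M V hV (π (k + 1)) (V (π k)) hle
    calc M.T (V (π k)) i = M.Tpol (π (k + 1)) (V (π k)) i := (congrFun hg i).symm
      _ ≤ M.Tpol (π (k + 1)) (V (π (k + 1))) i := HowardAux.Tpol_mono M _ _ _ hval i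
      _ = V (π (k + 1)) i := (congrFun (hV (π (k + 1))) i).symm
  have hcon : ∀ k < K, Δ (k + 1) ≤ M.γ * Δ k := by
    intro k hk
    obtain ⟨i0, hi0⟩ := HowardAux.mdv_exists M vs (V (π (k + 1)))
    have hΔeq : Δ (k + 1) = vs i0 - V (π (k + 1)) i0 := hi0
    have h1 := himp k hk i0
    have h2 := HowardAux.Tpol_le_T M pg (V (π k)) i0
    have h3 := hpgT i0
    have h4 := HowardAux.Tpol_lip M pg vs (V (π k)) i0
    have h5 : HowardAux.mdv M vs (V (π k)) = Δ k := rfl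
    rw [hvs] at h3
    linarith [hΔeq, h5 ▸ h4]
  have hpow : ∀ j k, k + j < K → Δ (k + j) ≤ M.γ ^ j * Δ k := by
    intro j
    induction j with
    | zero => intro k hk; simp
    | succ j ih =>
      intro k hk
      have h3 := ih k (by omega)
      have h2 := hcon (k + j) (by omega)
      calc Δ (k + (j + 1)) = Δ ((k + j) + 1) := by ring_nf
        _ ≤ M.γ * Δ (k + j) := h2
        _ ≤ M.γ * (M.γ ^ j * Δ k) := mul_le_mul_of_nonneg_left h3 M.γ_pos.le
        _ = M.γ ^ (j + 1) * Δ k := by ring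
  have hsfun : ∀ k, ∃ s, Δ k = vs s - V (π k) s := fun k => HowardAux.mdv_exists M vs (V (π k))
  choose sf hsf using hsfun
  have hkey1 : ∀ k < K, M.Tpol (π k) vs (sf k) ≤ vs (sf k) - (1 - M.γ) * Δ k := by
    intro k hk
    have h1 := HowardAux.Tpol_lip M (π k) vs (V (π k)) (sf k)
    have h2 : M.Tpol (π k) (V (π k)) (sf k) = V (π k) (sf k) := (congrFun (hV (π k)) (sf k)).symm
    have h3 := hsf k
    have h5 : HowardAux.mdv M vs (V (π k)) = Δ k := rfl
    rw [h5] at h1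
    linarith
  have hkey2 : ∀ k1 k', k1 ≤ k' → k' < K → π (k' + 1) (sf k1) = π k1 (sf k1) →
      1 - M.γ ≤ M.γ ^ (k' + 1 - k1) := by
    intro k1 k' hle hk' hact
    have hk1K : k1 < K := by omega
    have hg := (hrun k' hk').2
    have e1 : M.Tpol (π (k' + 1)) (V (π k')) (sf k1) = M.T (V (π k')) (sf k1) := congrFun hg _
    have e2 : M.Tpol (π (k' + 1)) (V (π k')) (sf k1) = M.Tpol (π k1) (V (π k')) (sf k1) :=
      HowardAux.Tpol_congr M _ _ _ _ hact
    have e3 : M.Tpol (π k1) (V (π k')) (sf k1) ≤ M.Tpol (π k1) vs (sf k1) := by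
      refine HowardAux.Tpol_mono M _ _ _ (fun j => ?_) _
      rw [hvs]; exact HowardAux.value_le_vstar M V (π k') j
    have e4 := hkey1 k1 hk1K
    have e5 := HowardAux.Tpol_lip M pg vs (V (π k')) (sf k1)
    have e5' : HowardAux.mdv M vs (V (π k')) = Δ k' := rfl
    rw [e5'] at e5
    have e6 : M.Tpol pg (V (π k')) (sf k1) ≤ M.T (V (π k')) (sf k1) :=
      HowardAux.Tpol_le_T M pg _ _
    have e7 := hpgT (sf k1)
    rw [hvs] at e7
    have hstep : (1 - M.γ) * Δ k1 ≤ M.γ * Δ k' := by linarith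
    have hcontr : Δ k' ≤ M.γ ^ (k' - k1) * Δ k1 := by
      have h := hpow (k' - k1) k1 (by omega)
      rwa [show k1 + (k' - k1) = k' from by omega] at h
    have hpos := hΔpos k1 hk1K
    have hfin : (1 - M.γ) * Δ k1 ≤ M.γ ^ (k' + 1 - k1) * Δ k1 := by
      have h8 : M.γ * Δ k' ≤ M.γ * (M.γ ^ (k' - k1) * Δ k1) :=
        mul_le_mul_of_nonneg_left hcontr M.γ_pos.le
      have h9 : M.γ * (M.γ ^ (k' - k1) * Δ k1) = M.γ ^ (k' + 1 - k1) * Δ k1 := by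
        rw [show k' + 1 - k1 = (k' - k1) + 1 from by omega]; ring
      linarith
    exact le_of_mul_le_mul_right (by linarith) hpos
  set S : Finset (Fin n × Fin m) :=
    Finset.univ.filter (fun p : Fin n × Fin m => M.Tpol (fun _ => p.2) vs p.1 < vs p.1) with hS
  have hmemS : ∀ k < K, (sf k, π k (sf k)) ∈ S := by
    intro k hk
    simp only [hS, Finset.mem_filter, Finset.mem_univ, true_and]
    have h1 := hkey1 k hk
    have h2 : M.Tpol (fun _ => π k (sf k)) vs (sf k) = M.Tpol (π k) vs (sf k) :=
      HowardAux.Tpol_congr M _ _ _ _ rfl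
    have h3 := hΔpos k hk
    rw [h2]
    nlinarith
  have hScard : S.card ≤ n * (m - 1) := by
    have hsub : S ⊆ Finset.univ.filter (fun p : Fin n × Fin m => p.2 ≠ pg p.1) := by
      intro p hp
      simp only [hS, Finset.mem_filter, Finset.mem_univ, true_and] at hp
      simp only [Finset.mem_filter, Finset.mem_univ, true_and]
      intro heq
      have hcg : M.Tpol (fun _ => p.2) vs p.1 = M.Tpol pg vs p.1 :=
        HowardAux.Tpol_congr M _ _ _ _ heq
      have h7 := hpgT p.1
      rw [hvs] at h7
      rw [hcg, h7] at hp
      exact lt_irrefl _ hp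
    have hinj : Function.Injective (fun s : Fin n => (s, pg s)) := by
      intro a b h
      exact congrArg Prod.fst h
    have hgraph : (Finset.univ.filter (fun p : Fin n × Fin m => ¬ p.2 ≠ pg p.1)).card = n := by
      have he : Finset.univ.filter (fun p : Fin n × Fin m => ¬ p.2 ≠ pg p.1) =
          Finset.univ.image (fun s : Fin n => (s, pg s)) := by
        ext p
        simp only [Finset.mem_filter, Finset.mem_univ, true_and, Finset.mem_image, not_not]
        constructor
        · intro h
          exact ⟨p.1, Prod.ext rfl h.symm⟩
        · rintro ⟨s, rfl⟩
          rfl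
      rw [he, Finset.card_image_of_injective _ hinj, Finset.card_univ, Fintype.card_fin]
    have hsplit := Finset.card_filter_add_card_filter_not
      (s := (Finset.univ : Finset (Fin n × Fin m))) (p := fun p => p.2 ≠ pg p.1)
    have huniv : (Finset.univ : Finset (Fin n × Fin m)).card = n * m := by
      simp [Fintype.card_prod]
    have hcard2 : (Finset.univ.filter (fun p : Fin n × Fin m => p.2 ≠ pg p.1)).card = n * m - n := by
      omega
    calc S.card ≤ (Finset.univ.filter (fun p : Fin n × Fin m => p.2 ≠ pg p.1)).card :=
          Finset.card_le_card hsub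
      _ = n * m - n := hcard2
      _ = n * (m - 1) := HowardAux.nm_sub n m
  set F : Fin K → Fin n × Fin m := fun k => (sf k, π k (sf k)) with hF
  have hFmem : ∀ k ∈ (Finset.univ : Finset (Fin K)), F k ∈ S := fun k _ => hmemS k k.isLt
  have hcount := Finset.card_eq_sum_card_fiberwise hFmem
  have hfiber : ∀ p ∈ S, (Finset.univ.filter (fun k : Fin K => F k = p)).card ≤ kst := by
    intro p _
    set fb := Finset.univ.filter (fun k : Fin K => F k = p) with hfb
    rcases Finset.eq_empty_or_nonempty fb with he | hne
    · rw [he]; simp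
    · obtain ⟨k1, hk1mem, hk1min⟩ := Finset.exists_min_image fb (fun k => (k : ℕ)) hne
      have hbound : ∀ k ∈ fb, (k : ℕ) ∈ Finset.Ico (k1 : ℕ) ((k1 : ℕ) + kst) := by
        intro k hkmem
        rw [Finset.mem_Ico]
        refine ⟨hk1min k hkmem, ?_⟩
        rcases eq_or_lt_of_le (hk1min k hkmem) with heq | hlt
        · omega
        · -- k1 < k, same pair
          have hFk1 : F k1 = p := (Finset.mem_filter.mp hk1mem).2
          have hFk : F k = p := (Finset.mem_filter.mp hkmem).2
          have hpair : F k1 = F k := by rw [hFk1, hFk]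
          have hs : sf (k1 : ℕ) = sf (k : ℕ) := congrArg Prod.fst hpair
          have ha : π (k1 : ℕ) (sf (k1 : ℕ)) = π (k : ℕ) (sf (k : ℕ)) := congrArg Prod.snd hpair
          have hact : π ((k : ℕ) - 1 + 1) (sf (k1 : ℕ)) = π (k1 : ℕ) (sf (k1 : ℕ)) := by
            rw [show (k : ℕ) - 1 + 1 = (k : ℕ) from by omega]
            calc π (k : ℕ) (sf (k1 : ℕ)) = π (k : ℕ) (sf (k : ℕ)) := by rw [hs]
              _ = π (k1 : ℕ) (sf (k1 : ℕ)) := ha.symm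
          have hk2 := hkey2 (k1 : ℕ) ((k : ℕ) - 1) (by omega) (by omega) hact
          rw [show (k : ℕ) - 1 + 1 - (k1 : ℕ) = (k : ℕ) - (k1 : ℕ) from by omega] at hk2
          by_contra hge
          push_neg at hge
          have hkk : kst ≤ (k : ℕ) - (k1 : ℕ) := by omega
          have hp2 : M.γ ^ ((k : ℕ) - (k1 : ℕ)) ≤ M.γ ^ kst :=
            pow_le_pow_of_le_one M.γ_pos.le M.γ_lt_one.le hkk
          linarith
      have hinj2 : Set.InjOn (fun k : Fin K => (k : ℕ)) fb := fun a _ b _ h => Fin.ext h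
      calc fb.card ≤ (Finset.Ico (k1 : ℕ) ((k1 : ℕ) + kst)).card :=
            Finset.card_le_card_of_injOn _ hbound hinj2
        _ = kst := by rw [Nat.card_Ico]; omega
  have hKnat : K ≤ n * (m - 1) * kst := by
    have h1 : (Finset.univ : Finset (Fin K)).card = K := by simp
    have h2 : ∑ p ∈ S, (Finset.univ.filter (fun k : Fin K => F k = p)).card ≤ ∑ _p ∈ S, kst :=
      Finset.sum_le_sum hfiber
    have h3 : ∑ _p ∈ S, kst = S.card * kst := by
      rw [Finset.sum_const, smul_eq_mul]
    calc K = (Finset.univ : Finset (Fin K)).card := h1.symm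
      _ = ∑ p ∈ S, (Finset.univ.filter (fun k : Fin K => F k = p)).card := hcount
      _ ≤ S.card * kst := by rw [← h3]; exact h2
      _ ≤ n * (m - 1) * kst := Nat.mul_le_mul_right _ hScard
  have hcr : ((kst : ℕ) : ℝ) = (c : ℝ) := by
    rw [hkstdef]
    have h := Int.toNat_of_nonneg (show (0 : ℤ) ≤ c by omega)
    exact_mod_cast h
  have hm1 : ((m - 1 : ℕ) : ℝ) = (m : ℝ) - 1 := by
    have hm : 1 ≤ m := le_trans one_le_two M.m_ge_two
    push_cast [Nat.cast_sub hm]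
    ring
  have hcast : ((n * (m - 1) * kst : ℕ) : ℝ) = (n : ℝ) * ((m : ℝ) - 1) * (c : ℝ) := by
    push_cast [hm1, hcr]
    ring
  calc (K : ℝ) ≤ ((n * (m - 1) * kst : ℕ) : ℝ) := by exact_mod_cast hKnat
    _ = (n : ℝ) * ((m : ℝ) - 1) * (c : ℝ) := hcast
end

section
/- For all pairs of policies π and π' of the MDP, 1ᵀ(v_{π'} − v_π) = x_{π'}ᵀ (T_{π'} v_π − v_π), where x_{π'} = (I − γ P_{π'}ᵀ)⁻¹ 1. -/
open Matrix BigOperators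

/-!
Subtracting the Bellman equations of `π'` at `v_{π'}` and at `v_π` gives
`(I - γ P_{π'}) (v_{π'} - v_π) = T_{π'} v_π - v_π`. The matrix `I - γ P_{π'}` is strictly
diagonally dominant, hence invertible, and pairing with `1` moves its inverse, transposed,
onto `1`, which yields `x_{π'}`.
-/

namespace Matrix

variable {ι K : Type*} [Fintype ι] [DecidableEq ι] [NormedField K]

theorem det_one_sub_smul_ne_zero {P : Matrix ι ι K} {γ : K} (hγ : ‖γ‖ < 1)
    (hP : ∀ i, ∑ j, ‖P i j‖ ≤ 1) : (1 - γ • P).det ≠ 0 := by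
  refine det_ne_zero_of_sum_row_lt_diag fun k => ?_
  have hoff : ∑ j ∈ Finset.univ.erase k, ‖(1 - γ • P) k j‖
      = ‖γ‖ * (∑ j, ‖P k j‖ - ‖P k k‖) := by
    rw [← Finset.sum_erase_add _ _ (Finset.mem_univ k), add_sub_cancel_right, Finset.mul_sum]
    refine Finset.sum_congr rfl fun j hj => ?_
    simp [one_apply_ne' (Finset.ne_of_mem_erase hj), norm_mul]
  have hdiag : 1 - ‖γ‖ * ‖P k k‖ ≤ ‖(1 - γ • P) k k‖ := by
    simpa [norm_mul] using norm_sub_norm_le (1 : K) (γ * P k k)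
  rw [hoff]
  nlinarith [hP k, norm_nonneg γ, norm_nonneg (P k k)]

theorem dotProduct_eq_inv_transpose_mulVec_dotProduct {A : Matrix ι ι K} (hA : IsUnit A.det)
    {w d : ι → K} (hAw : A *ᵥ w = d) (u : ι → K) : u ⬝ᵥ w = ((Aᵀ)⁻¹ *ᵥ u) ⬝ᵥ d := by
  rw [← hAw, ← transpose_nonsing_inv, mulVec_transpose, ← dotProduct_mulVec, mulVec_mulVec,
    nonsing_inv_mul A hA, one_mulVec]

end Matrix

namespace MDP

variable {n m : ℕ} (M : MDP n m) (π : Policy n m)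

theorem det_one_sub_smul_P_ne_zero : (1 - M.γ • M.P π).det ≠ 0 := by
  refine det_one_sub_smul_ne_zero ?_ fun i => ?_
  · rw [Real.norm_of_nonneg M.γ_pos.le]
    exact M.γ_lt_one
  · simp [P, Real.norm_of_nonneg (M.p_nonneg _ _ _), M.p_sum]

theorem xPol_eq : M.xPol π = ((1 - M.γ • M.P π)ᵀ)⁻¹ *ᵥ 1 := by
  rw [xPol, transpose_sub, transpose_smul, transpose_one]
  rfl

theorem one_sub_smul_P_mulVec_sub {v v' : Fin n → ℝ} (hv' : M.Tpol π v' = v') :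
    (1 - M.γ • M.P π) *ᵥ (v' - v) = M.Tpol π v - v := by
  funext i
  have hi := congrFun hv' i
  simp only [Tpol] at hi
  simp only [Tpol, sub_mulVec, smul_mulVec, one_mulVec, mulVec_sub, Pi.sub_apply, Pi.smul_apply,
    smul_eq_mul]
  linarith

end MDP

/-- for all policies `π, π'`,
`1ᵀ(v_{π'} - v_π) = x_{π'}ᵀ (T_{π'} v_π - v_π)` where `x_{π'} = (I - γ P_{π'}ᵀ)⁻¹ 1`. -/
theorem value_difference_identity' {n m : ℕ} (M : MDP n m)
    (V : MDP.Policy n m → Fin n → ℝ) (hV : M.IsValue V)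
    (π π' : MDP.Policy n m) :
    ∑ i, (V π' i - V π i) = ∑ i, M.xPol π' i * (M.Tpol π' (V π) i - V π i) := by
  have hA := (M.det_one_sub_smul_P_ne_zero π').isUnit
  have hw := M.one_sub_smul_P_mulVec_sub π' (v := V π) (hV π').symm
  calc ∑ i, (V π' i - V π i) = 1 ⬝ᵥ (V π' - V π) := (one_dotProduct _).symm
    _ = M.xPol π' ⬝ᵥ (M.Tpol π' (V π) - V π) := by
      rw [dotProduct_eq_inv_transpose_mulVec_dotProduct hA hw, M.xPol_eq]
end

section
/- Suppose the MDP satisfies Assumption 1 with constants τ_t and τ_r. Let π be a non-optimal policy, let π' be obtained from π by one step of Simplex-PI, and let π† be a policy with v_{π†} ≥ v_{π'} (componentwise) such that π†(s) = π(s) for every state s that is recurrent for π†. Then 1ᵀ(v_{π†} − v_{π'}) ≤ (1 − 1/(n τ_t)) · 1ᵀ(v_{π†} − v_π). -/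
open Matrix BigOperators

section Aux

open Matrix

variable {n m : ℕ}

/-- Pointwise monotonicity: a solution of `u = γ P u + b` with `b ≥ 0` is nonnegative. -/
lemma aux_nonneg (M : MDP n m) (π : MDP.Policy n m) (u b : Fin n → ℝ)
    (hub : ∀ i, u i = M.γ * (M.P π *ᵥ u) i + b i) (hb : ∀ i, 0 ≤ b i) :
    ∀ i, 0 ≤ u i := by
  intro i
  obtain ⟨j, -, hj⟩ := Finset.exists_min_image Finset.univ u ⟨i, Finset.mem_univ i⟩
  have hPu : u j ≤ (M.P π *ᵥ u) j := by
    have h1 : (M.P π *ᵥ u) j = ∑ k, M.p j (π j) k * u k := by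
      simp [Matrix.mulVec, dotProduct, MDP.P]
    rw [h1]
    calc u j = ∑ k, M.p j (π j) k * u j := by
          rw [← Finset.sum_mul, M.p_sum, one_mul]
      _ ≤ ∑ k, M.p j (π j) k * u k :=
          Finset.sum_le_sum fun k _ =>
            mul_le_mul_of_nonneg_left (hj k (Finset.mem_univ k)) (M.p_nonneg j (π j) k)
  have hγ0 := M.γ_pos
  have hγ1 := M.γ_lt_one
  have h2 := hub j
  have h3 := hb j
  have h4 : 0 ≤ u j := by nlinarith [mul_le_mul_of_nonneg_left hPu hγ0.le]
  exact le_trans h4 (hj i (Finset.mem_univ i))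

/-- `I - γ P_π` is invertible. -/
lemma aux_isUnit (M : MDP n m) (π : MDP.Policy n m) :
    IsUnit ((1 : Matrix (Fin n) (Fin n) ℝ) - M.γ • M.P π).det := by
  rw [isUnit_iff_ne_zero]
  intro hdet
  obtain ⟨v, hv0, hv⟩ := Matrix.exists_mulVec_eq_zero_iff.2 hdet
  have hkey : ∀ i, v i = M.γ * (M.P π *ᵥ v) i := by
    intro i
    have := congrFun hv i
    simp [Matrix.sub_mulVec, Matrix.one_mulVec, Matrix.smul_mulVec] at this
    linarith
  have h1 : ∀ i, 0 ≤ v i :=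
    aux_nonneg M π v (fun _ => 0) (fun i => by simpa using hkey i) (fun i => le_refl 0)
  have h2 : ∀ i, 0 ≤ -v i := by
    apply aux_nonneg M π (fun i => -v i) (fun _ => 0)
    · intro i
      have h3 : (M.P π *ᵥ fun i => -v i) i = -(M.P π *ᵥ v) i := by
        simp [Matrix.mulVec, dotProduct, Finset.sum_neg_distrib]
      rw [h3]
      have := hkey i
      ring_nf
      ring_nf at this
      linarith
    · intro i; exact le_refl 0
  apply hv0
  funext i
  have ha := h1 i
  have hb2 := h2 i
  simp only [Pi.zero_apply]
  linarith

/-- `(I - γ P_π)⁻¹` maps nonnegative vectors to nonnegative vectors. -/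
lemma aux_inv_nonneg (M : MDP n m) (π : MDP.Policy n m) (b : Fin n → ℝ)
    (hb : ∀ i, 0 ≤ b i) :
    ∀ i, 0 ≤ (((1 : Matrix (Fin n) (Fin n) ℝ) - M.γ • M.P π)⁻¹ *ᵥ b) i := by
  set A := (1 : Matrix (Fin n) (Fin n) ℝ) - M.γ • M.P π with hA
  set u := A⁻¹ *ᵥ b with hu
  have hAu : A *ᵥ u = b := by
    rw [hu, Matrix.mulVec_mulVec, Matrix.mul_nonsing_inv A (aux_isUnit M π),
      Matrix.one_mulVec]
  have hub : ∀ i, u i = M.γ * (M.P π *ᵥ u) i + b i := by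
    intro i
    have := congrFun hAu i
    simp [hA, Matrix.sub_mulVec, Matrix.one_mulVec, Matrix.smul_mulVec] at this
    linarith
  exact aux_nonneg M π u b hub hb

/-- `T_π v` only depends on `π` through its value at the evaluated component. -/
lemma aux_Tpol_congr (M : MDP n m) (σ σ' : MDP.Policy n m) (v : Fin n → ℝ) (i : Fin n)
    (h : σ i = σ' i) : M.Tpol σ v i = M.Tpol σ' v i := by
  simp [MDP.Tpol, MDP.rPol, MDP.P, Matrix.mulVec, dotProduct, h]

/-- `T_σ v ≤ T v` componentwise. -/
lemma aux_Tpol_le_T (M : MDP n m) (σ : MDP.Policy n m) (v : Fin n → ℝ) (i : Fin n) :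
    M.Tpol σ v i ≤ M.T v i := by
  have hm : 0 < m := by have := M.m_ge_two; omega
  exact le_ciSup (Set.Finite.bddAbove (Set.finite_range fun π : MDP.Policy n m => M.Tpol π v i)) σ

/-- The Bellman difference identity for two policies. -/
lemma aux_diff_eq (M : MDP n m) (V : MDP.Policy n m → Fin n → ℝ) (hV : M.IsValue V)
    (σ π : MDP.Policy n m) (i : Fin n) :
    V σ i - V π i =
      M.γ * (M.P σ *ᵥ (fun j => V σ j - V π j)) i + (M.Tpol σ (V π) i - V π i) := by
  have hσ := congrFun (hV σ) i
  have hsplit : (M.P σ *ᵥ (fun j => V σ j - V π j)) i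
      = (M.P σ *ᵥ V σ) i - (M.P σ *ᵥ V π) i := by
    simp [Matrix.mulVec, dotProduct, mul_sub, Finset.sum_sub_distrib]
  rw [hsplit]
  simp only [MDP.Tpol] at hσ ⊢
  linarith

end Aux

/-- under Assumption 1, if no new recurrent class is created before
reaching `π†` (i.e. `π†` agrees with `π` on its recurrent states and `v_{π†} ≥ v_{π'}`),
then a Simplex-PI step from `π` to `π'` contracts `1ᵀ(v_{π†} - v_π)` with coefficient
`1 - 1/(n τ_t)`. -/
theorem simplex_transient_contraction {n m : ℕ} (M : MDP n m)
    (τt τr : ℝ) (h1 : M.Ass1 τt τr)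
    (V : MDP.Policy n m → Fin n → ℝ) (hV : M.IsValue V)
    (π π' πd : MDP.Policy n m) (hπ : ¬ M.IsOptimal V π)
    (hstep : M.SimplexStep V π π')
    (hge : ∀ i, V π' i ≤ V πd i)
    (hrec : ∀ s, M.Recurrent πd s → πd s = π s) :
    ∑ i, (V πd i - V π' i) ≤
      (1 - 1 / ((n : ℝ) * τt)) * ∑ i, (V πd i - V π i) := by
    classical
  obtain ⟨s, hagree, hmax, hTs⟩ := hstep
  have hγ0 := M.γ_pos
  have hγ1 := M.γ_lt_one
  have hτt : 1 ≤ τt := h1.1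
  have hn1 : 1 ≤ (n : ℝ) := by exact_mod_cast M.n_pos
  have hpos : 0 < (n : ℝ) * τt := by nlinarith
  set adv := M.T (V π) s - V π s with hadv_def
  have hadv0 : 0 ≤ adv := by
    have h2 : V π s = M.Tpol π (V π) s := congrFun (hV π) s
    have h3 := aux_Tpol_le_T M π (V π) s
    simp only [hadv_def]
    linarith
  -- Step A: ∑ (V π' - V π) ≥ adv
  have hb' : ∀ i, 0 ≤ M.Tpol π' (V π) i - V π i := by
    intro i
    by_cases hi : i = s
    · subst hi; rw [hTs]; exact hadv0
    · rw [aux_Tpol_congr M π' π (V π) i (hagree i hi)]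
      rw [← congrFun (hV π) i]
      simp
  have hediff := fun i => aux_diff_eq M V hV π' π i
  have hu0 : ∀ i, 0 ≤ V π' i - V π i := by
    have := aux_nonneg M π' (fun j => V π' j - V π j)
      (fun i => M.Tpol π' (V π) i - V π i) hediff hb'
    simpa using this
  have hus : adv ≤ V π' s - V π s := by
    have h4 := hediff s
    have hPu : 0 ≤ (M.P π' *ᵥ fun j => V π' j - V π j) s := by
      have h11 : (M.P π' *ᵥ fun j => V π' j - V π j) s
          = ∑ j, M.p s (π' s) j * (V π' j - V π j) := by
        simp [Matrix.mulVec, dotProduct, MDP.P]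
      rw [h11]
      exact Finset.sum_nonneg fun j _ => mul_nonneg (M.p_nonneg s (π' s) j) (hu0 j)
    rw [hTs] at h4
    nlinarith [mul_nonneg hγ0.le hPu]
  have hSumA : adv ≤ ∑ i, (V π' i - V π i) :=
    le_trans hus (Finset.single_le_sum (fun i _ => hu0 i) (Finset.mem_univ s))
  -- Step B: ∑ (V πd - V π) = ∑ x_i * bd_i ≤ n * τt * adv
  set A : Matrix (Fin n) (Fin n) ℝ := (1 : Matrix (Fin n) (Fin n) ℝ) - M.γ • M.P πd with hA
  set bd : Fin n → ℝ := fun i => M.Tpol πd (V π) i - V π i with hbd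
  have hAw : A *ᵥ (fun i => V πd i - V π i) = bd := by
    funext i
    have h5 := aux_diff_eq M V hV πd π i
    simp only [hA, Matrix.sub_mulVec, Matrix.one_mulVec, Matrix.smul_mulVec,
      Pi.sub_apply, Pi.smul_apply, smul_eq_mul, hbd]
    linarith
  have hw : (fun i => V πd i - V π i) = A⁻¹ *ᵥ bd := by
    rw [← hAw, Matrix.mulVec_mulVec, Matrix.nonsing_inv_mul A (aux_isUnit M πd),
      Matrix.one_mulVec]
  have hx : M.xPol πd = (fun _ => (1 : ℝ)) ᵥ* A⁻¹ := by
    have hAT : ((1 : Matrix (Fin n) (Fin n) ℝ) - M.γ • (M.P πd)ᵀ) = Aᵀ := by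
      simp [hA, Matrix.transpose_sub, Matrix.transpose_smul, Matrix.transpose_one]
    rw [MDP.xPol, hAT, ← Matrix.transpose_nonsing_inv, Matrix.mulVec_transpose]
  have hSumB : ∑ i, (V πd i - V π i) = ∑ i, M.xPol πd i * bd i := by
    have h6 : ∑ i, (V πd i - V π i) = (fun _ => (1 : ℝ)) ⬝ᵥ (fun i => V πd i - V π i) := by
      simp [dotProduct]
    rw [h6, hw, Matrix.dotProduct_mulVec, ← hx]
    simp [dotProduct]
  have hxnn : ∀ i, 0 ≤ M.xPol πd i := by
    intro i
    rw [hx]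
    have h7 : ((fun _ => (1 : ℝ)) ᵥ* A⁻¹) i = ∑ j, A⁻¹ j i := by
      simp [Matrix.vecMul, dotProduct]
    rw [h7]
    apply Finset.sum_nonneg
    intro j _
    have hcol : A⁻¹ j i = (A⁻¹ *ᵥ Pi.single i 1) j := by
      simp [Matrix.mulVec_single]
    rw [hcol]
    refine aux_inv_nonneg M πd (Pi.single i 1) (fun k => ?_) j
    rcases eq_or_ne k i with h | h
    · subst h; simp
    · simp [Pi.single_apply, h]
  have hterm : ∀ i, M.xPol πd i * bd i ≤ τt * adv := by
    intro i
    by_cases hi : M.Recurrent πd i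
    · have h8 : bd i = 0 := by
        simp only [hbd]
        rw [aux_Tpol_congr M πd π (V π) i (by rw [hrec i hi]), ← congrFun (hV π) i]
        ring
      rw [h8, mul_zero]
      exact mul_nonneg (by linarith) hadv0
    · have hxt : M.xPol πd i ≤ τt := h1.2.2.1 πd i hi
      have hbda : bd i ≤ adv := by
        have h9 := aux_Tpol_le_T M πd (V π) i
        have h10 := hmax i
        simp only [hbd, hadv_def]
        linarith
      nlinarith [hxnn i, mul_nonneg (hxnn i) (sub_nonneg.2 hbda),
        mul_nonneg (sub_nonneg.2 hxt) hadv0]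
  have hD : ∑ i, (V πd i - V π i) ≤ (n : ℝ) * τt * adv := by
    rw [hSumB]
    calc ∑ i, M.xPol πd i * bd i ≤ ∑ _i : Fin n, τt * adv :=
          Finset.sum_le_sum fun i _ => hterm i
      _ = (n : ℝ) * τt * adv := by
          rw [Finset.sum_const, Finset.card_univ, Fintype.card_fin, nsmul_eq_mul]; ring
  -- combine
  have hsplit : ∑ i, (V πd i - V π i)
      = ∑ i, (V πd i - V π' i) + ∑ i, (V π' i - V π i) := by
    rw [← Finset.sum_add_distrib]
    exact Finset.sum_congr rfl fun i _ => by ring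
  have hdiv : (∑ i, (V πd i - V π i)) / ((n : ℝ) * τt) ≤ adv :=
    (div_le_iff₀ hpos).2 (by linarith)
  have hkey : (1 - 1 / ((n : ℝ) * τt)) * ∑ i, (V πd i - V π i)
      = ∑ i, (V πd i - V π i) - (∑ i, (V πd i - V π i)) / ((n : ℝ) * τt) := by
    ring
  rw [hkey]
  linarith
end

section
/- Suppose the MDP satisfies Assumption 1 with constants τ_t and τ_r. Let π, π', π† be policies with v_{π†} ≥ v_{π'} ≥ v_π (componentwise), and let s₀ be a state transient for π such that x_π(s₀)(v_{π†}(s₀) − T_π v_{π†}(s₀)) ≥ (1/n) · x_πᵀ(v_{π†} − T_π v_{π†}). If π'(s₀) = π(s₀), then 1ᵀ(v_{π†} − v_{π'}) ≥ (1/(n τ_t)) · 1ᵀ(v_{π†} − v_π). -/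
open Matrix BigOperators

section Aux

open Matrix BigOperators MDP

attribute [local instance] Matrix.linftyOpNormedRing Matrix.linftyOpNormedSpace

namespace MDPAux

variable {n m : ℕ} (M : MDP n m) (π : MDP.Policy n m)

lemma norm_P_le_one : ‖M.P π‖ ≤ 1 := by
  rw [Matrix.linfty_opNorm_def]
  rw [show (1:ℝ) = ((1:NNReal):ℝ) by norm_num, NNReal.coe_le_coe]
  refine Finset.sup_le fun i _ => ?_
  rw [← NNReal.coe_le_coe]
  push_cast
  calc ∑ j, ‖M.P π i j‖ = ∑ j, M.p i (π i) j :=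
        Finset.sum_congr rfl fun j _ => Real.norm_of_nonneg (M.p_nonneg i (π i) j)
    _ = 1 := M.p_sum i (π i)
    _ ≤ 1 := le_rfl

lemma norm_B_lt_one : ‖M.γ • M.P π‖ < 1 := by
  rw [norm_smul, Real.norm_of_nonneg M.γ_pos.le]
  calc M.γ * ‖M.P π‖ ≤ M.γ * 1 :=
        mul_le_mul_of_nonneg_left (norm_P_le_one M π) M.γ_pos.le
    _ < 1 := by simpa using M.γ_lt_one

lemma isUnit_A : IsUnit ((1 : Matrix (Fin n) (Fin n) ℝ) - M.γ • M.P π) :=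
  isUnit_one_sub_of_norm_lt_one (norm_B_lt_one M π)

lemma hasSum_inv :
    HasSum (fun k : ℕ => (M.γ • M.P π) ^ k)
      ((1 : Matrix (Fin n) (Fin n) ℝ) - M.γ • M.P π)⁻¹ := by
  rw [Matrix.nonsing_inv_eq_ringInverse]
  exact hasSum_geom_series_inverse _ (norm_B_lt_one M π)

lemma pow_entry_nonneg (k : ℕ) (i j : Fin n) : 0 ≤ ((M.γ • M.P π) ^ k) i j := by
  induction k generalizing i j with
  | zero => simp [Matrix.one_apply]; positivity
  | succ k ih =>
    rw [pow_succ, Matrix.mul_apply]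
    refine Finset.sum_nonneg fun l _ => mul_nonneg (ih i l) ?_
    exact mul_nonneg M.γ_pos.le (M.p_nonneg l (π l) j)

lemma inv_entry_nonneg (i j : Fin n) :
    0 ≤ (((1 : Matrix (Fin n) (Fin n) ℝ) - M.γ • M.P π)⁻¹) i j := by
  let L : Matrix (Fin n) (Fin n) ℝ →ₗ[ℝ] ℝ :=
    { toFun := fun A => A i j
      map_add' := fun _ _ => rfl
      map_smul' := fun _ _ => rfl }
  have hs := (hasSum_inv M π).mapL (LinearMap.toContinuousLinearMap L)
  exact hs.nonneg fun k => pow_entry_nonneg M π k i j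

lemma xPol_eq :
    M.xPol π = (fun _ => (1:ℝ)) ᵥ* ((1 : Matrix (Fin n) (Fin n) ℝ) - M.γ • M.P π)⁻¹ := by
  unfold MDP.xPol
  rw [show (1 : Matrix (Fin n) (Fin n) ℝ) - M.γ • (M.P π)ᵀ
      = ((1 : Matrix (Fin n) (Fin n) ℝ) - M.γ • M.P π)ᵀ by
    simp [Matrix.transpose_sub, Matrix.transpose_smul]]
  rw [← Matrix.transpose_nonsing_inv, Matrix.mulVec_transpose]

lemma xPol_nonneg (i : Fin n) : 0 ≤ M.xPol π i := by
  rw [xPol_eq]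
  simp only [Matrix.vecMul, dotProduct, one_mul]
  exact Finset.sum_nonneg fun j _ => inv_entry_nonneg M π j i

lemma sum_x_mul (w : Fin n → ℝ) :
    ∑ i, M.xPol π i * ((((1 : Matrix (Fin n) (Fin n) ℝ) - M.γ • M.P π)) *ᵥ w) i
      = ∑ i, w i := by
  have hA := (Matrix.isUnit_iff_isUnit_det _).mp (isUnit_A M π)
  calc ∑ i, M.xPol π i * ((((1 : Matrix (Fin n) (Fin n) ℝ) - M.γ • M.P π)) *ᵥ w) i
      = M.xPol π ⬝ᵥ ((((1 : Matrix (Fin n) (Fin n) ℝ) - M.γ • M.P π)) *ᵥ w) := rfl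
    _ = (M.xPol π ᵥ* (((1 : Matrix (Fin n) (Fin n) ℝ) - M.γ • M.P π))) ⬝ᵥ w :=
        Matrix.dotProduct_mulVec _ _ _
    _ = (fun _ => (1:ℝ)) ⬝ᵥ w := by
        rw [xPol_eq, Matrix.vecMul_vecMul, Matrix.nonsing_inv_mul _ hA, Matrix.vecMul_one]
    _ = ∑ i, w i := by simp [dotProduct]

end MDPAux

end Aux

/-- under Assumption 1, if `v_{π†} ≥ v_{π'} ≥ v_π`, `s₀` is transient for
`π` and carries at least a `1/n` fraction of `x_πᵀ(v_{π†} - T_π v_{π†})`, and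
`π'(s₀) = π(s₀)`, then `1ᵀ(v_{π†} - v_{π'}) ≥ (1/(n τ_t)) 1ᵀ(v_{π†} - v_π)`. -/
theorem transient_state_progress {n m : ℕ} (M : MDP n m)
    (τt τr : ℝ) (h1 : M.Ass1 τt τr)
    (V : MDP.Policy n m → Fin n → ℝ) (hV : M.IsValue V)
    (π π' πd : MDP.Policy n m)
    (hle1 : ∀ i, V π i ≤ V π' i) (hle2 : ∀ i, V π' i ≤ V πd i)
    (s0 : Fin n) (hs0 : M.Transient π s0)
    (hbig : (1 / (n : ℝ)) * ∑ i, M.xPol π i * (V πd i - M.Tpol π (V πd) i) ≤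
      M.xPol π s0 * (V πd s0 - M.Tpol π (V πd) s0))
    (heq : π' s0 = π s0) :
    (1 / ((n : ℝ) * τt)) * ∑ i, (V πd i - V π i) ≤ ∑ i, (V πd i - V π' i) := by
  obtain ⟨hτt, hτr, htrans, hrec⟩ := h1
  have hn : (0:ℝ) < n := by exact_mod_cast M.n_pos
  have hτt0 : (0:ℝ) < τt := lt_of_lt_of_le one_pos hτt
  -- the advantage vector equals (I - γP) applied to the value difference
  have hd : ∀ i, V πd i - M.Tpol π (V πd) i
      = ((((1 : Matrix (Fin n) (Fin n) ℝ) - M.γ • M.P π)) *ᵥ (V πd - V π)) i := by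
    intro i
    have h1 := congrFun (hV π) i
    simp only [MDP.Tpol, Pi.add_apply] at h1
    simp only [MDP.Tpol, Matrix.sub_mulVec, Matrix.one_mulVec, Matrix.smul_mulVec,
      Matrix.mulVec_sub, Pi.sub_apply, Pi.smul_apply, smul_eq_mul]
    linear_combination h1
  have key1 : ∑ i, M.xPol π i * (V πd i - M.Tpol π (V πd) i) = ∑ i, (V πd i - V π i) := by
    calc ∑ i, M.xPol π i * (V πd i - M.Tpol π (V πd) i)
        = ∑ i, M.xPol π i * ((((1 : Matrix (Fin n) (Fin n) ℝ) - M.γ • M.P π)) *ᵥ (V πd - V π)) i :=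
          Finset.sum_congr rfl fun i _ => by rw [hd i]
      _ = ∑ i, (V πd - V π) i := MDPAux.sum_x_mul M π _
      _ = ∑ i, (V πd i - V π i) := rfl
  -- at s0, the advantage is at most the value gap to π'
  have hv' : V π' s0 = (∑ j, M.p s0 (π s0) j * M.r s0 (π s0) j)
      + M.γ * ∑ j, M.p s0 (π s0) j * V π' j := by
    have h2 := congrFun (hV π') s0
    simp only [MDP.Tpol, MDP.rPol, MDP.P, Matrix.mulVec, dotProduct, Matrix.of_apply,
      heq] at h2
    exact h2
  have hTd : M.Tpol π (V πd) s0 = (∑ j, M.p s0 (π s0) j * M.r s0 (π s0) j)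
      + M.γ * ∑ j, M.p s0 (π s0) j * V πd j := by
    simp only [MDP.Tpol, MDP.rPol, MDP.P, Matrix.mulVec, dotProduct, Matrix.of_apply]
  have hmono : ∑ j, M.p s0 (π s0) j * V π' j ≤ ∑ j, M.p s0 (π s0) j * V πd j :=
    Finset.sum_le_sum fun j _ => mul_le_mul_of_nonneg_left (hle2 j) (M.p_nonneg s0 (π s0) j)
  have key2 : V πd s0 - M.Tpol π (V πd) s0 ≤ V πd s0 - V π' s0 := by
    have := mul_le_mul_of_nonneg_left hmono M.γ_pos.le
    rw [hTd, hv']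
    linarith
  have key3 : V πd s0 - V π' s0 ≤ ∑ i, (V πd i - V π' i) :=
    Finset.single_le_sum (fun i _ => sub_nonneg.mpr (hle2 i)) (Finset.mem_univ s0)
  have hsumnn : (0:ℝ) ≤ ∑ i, (V πd i - V π' i) :=
    Finset.sum_nonneg fun i _ => sub_nonneg.mpr (hle2 i)
  have hbig' : (1/(n:ℝ)) * ∑ i, (V πd i - V π i)
      ≤ M.xPol π s0 * (V πd s0 - M.Tpol π (V πd) s0) := key1 ▸ hbig
  have h5 : (1/(n:ℝ)) * ∑ i, (V πd i - V π i) ≤ τt * ∑ i, (V πd i - V π' i) := by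
    rcases le_or_gt 0 (V πd s0 - M.Tpol π (V πd) s0) with hD | hD
    · calc (1/(n:ℝ)) * ∑ i, (V πd i - V π i)
          ≤ M.xPol π s0 * (V πd s0 - M.Tpol π (V πd) s0) := hbig'
        _ ≤ τt * (V πd s0 - M.Tpol π (V πd) s0) :=
            mul_le_mul_of_nonneg_right (htrans π s0 hs0) hD
        _ ≤ τt * ∑ i, (V πd i - V π' i) :=
            mul_le_mul_of_nonneg_left (key2.trans key3) hτt0.le
    · have hx0 := MDPAux.xPol_nonneg M π s0
      have : M.xPol π s0 * (V πd s0 - M.Tpol π (V πd) s0) ≤ 0 :=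
        mul_nonpos_of_nonneg_of_nonpos hx0 hD.le
      have h0 : (0:ℝ) ≤ τt * ∑ i, (V πd i - V π' i) := mul_nonneg hτt0.le hsumnn
      linarith [hbig']
  calc (1/((n:ℝ)*τt)) * ∑ i, (V πd i - V π i)
      = (1/τt) * ((1/(n:ℝ)) * ∑ i, (V πd i - V π i)) := by
        rw [one_div, one_div, one_div, mul_inv]; ring
    _ ≤ (1/τt) * (τt * ∑ i, (V πd i - V π' i)) :=
        mul_le_mul_of_nonneg_left h5 (by positivity)
    _ = ∑ i, (V πd i - V π' i) := by
        rw [one_div, inv_mul_cancel_left₀ hτt0.ne']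
end
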